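/- Let X be a Banach function space over ℝⁿ which is A_p-regular for some 1 ≤ p < ∞. Suppose there exists δ > 0 such that the Hardy–Littlewood maximal operator M is bounded on X^δ. Then M is bounded on X. -/

import Mathlib

open MeasureTheory ENNReal Filter Set
open Topology
open scoped NNReal ENNReal

noncomputable section

/-- The axis-parallel closed cube in `ℝⁿ` with lower corner `a` and side length `h`. -/
def Cube {n : ℕ} (a : Fin n → ℝ) (h : ℝ) : Set (Fin n → ℝ) :=
  {x | ∀ i, x i ∈ Set.Icc (a i) (a i + h)}

/-- The Hardy–Littlewood maximal operator, acting on nonnegative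
(extended-real-valued) measurable functions on `ℝⁿ`:
`Mf(x) = sup_{Q ∋ x} (1/|Q|) ∫_Q f`, the sup over all cubes `Q` containing `x`. -/
def hlMaximal {n : ℕ} (f : (Fin n → ℝ) → ℝ≥0∞) (x : Fin n → ℝ) : ℝ≥0∞ :=
  ⨆ (a : Fin n → ℝ) (h : ℝ) (_ : 0 < h) (_ : x ∈ Cube a h),
    (∫⁻ y in Cube a h, f y) / volume (Cube a h)

/-- The Hardy–Littlewood maximal operator of a real-valued function. -/
def hlMaximalR {n : ℕ} (f : (Fin n → ℝ) → ℝ) : (Fin n → ℝ) → ℝ≥0∞ :=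
  hlMaximal (fun x => (‖f x‖₊ : ℝ≥0∞))

/-- The non-increasing rearrangement `f^*(t) = inf {α : |{|f| > α}| ≤ t}`. -/
def decRearr {n : ℕ} (f : (Fin n → ℝ) → ℝ≥0∞) (t : ℝ≥0∞) : ℝ≥0∞ :=
  sInf {α : ℝ≥0∞ | volume {x | α < f x} ≤ t}

/-- The local maximal operator `m_λ f(x) = sup_{Q ∋ x} (f χ_Q)^*(λ|Q|)`. -/
def locMax {n : ℕ} (lam : ℝ) (f : (Fin n → ℝ) → ℝ≥0∞) (x : Fin n → ℝ) : ℝ≥0∞ :=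
  ⨆ (a : Fin n → ℝ) (h : ℝ) (_ : 0 < h) (_ : x ∈ Cube a h),
    decRearr (Set.indicator (Cube a h) f) (ENNReal.ofReal lam * volume (Cube a h))

/-- A Banach function space over `ℝⁿ`, described (à la Bennett–Sharpley and
Lorist–Nieraeth) by its function norm `ρ` on nonnegative extended-real-valued
functions:  `ρ` is a norm on measurable functions satisfying the ideal property,
the Fatou property and the saturation property. -/
structure BanachFunctionSpace (n : ℕ) where
  ρ : ((Fin n → ℝ) → ℝ≥0∞) → ℝ≥0∞
  congr_ae : ∀ f g, Measurable f → Measurable g → f =ᵐ[volume] g → ρ f = ρ g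
  eq_zero_iff : ∀ f, Measurable f → (ρ f = 0 ↔ f =ᵐ[volume] 0)
  add_le : ∀ f g, Measurable f → Measurable g → ρ (fun x => f x + g x) ≤ ρ f + ρ g
  smul_eq : ∀ (c : ℝ≥0) f, Measurable f → ρ (fun x => (c : ℝ≥0∞) * f x) = (c : ℝ≥0∞) * ρ f
  -- ideal property
  mono : ∀ f g, Measurable f → Measurable g → (∀ᵐ x ∂volume, f x ≤ g x) → ρ f ≤ ρ g
  -- Fatou property
  fatou : ∀ f : ℕ → (Fin n → ℝ) → ℝ≥0∞, (∀ j, Measurable (f j)) →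
    (∀ x, Monotone fun j => f j x) → (⨆ j, ρ (f j)) < ⊤ →
    ρ (fun x => ⨆ j, f j x) = ⨆ j, ρ (f j)
  -- saturation property
  saturation : ∀ E : Set (Fin n → ℝ), MeasurableSet E → 0 < volume E →
    ∃ F, F ⊆ E ∧ MeasurableSet F ∧ 0 < volume F ∧ ρ (Set.indicator F fun _ => 1) < ⊤

/-- The associate (Köthe dual) norm: `‖f‖_{X'} = sup_{‖g‖_X ≤ 1} ∫ |fg|`. -/
def assocNorm {n : ℕ} (N : ((Fin n → ℝ) → ℝ≥0∞) → ℝ≥0∞)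
    (f : (Fin n → ℝ) → ℝ≥0∞) : ℝ≥0∞ :=
  ⨆ (g : (Fin n → ℝ) → ℝ≥0∞) (_ : Measurable g) (_ : N g ≤ 1), ∫⁻ x, f x * g x

/-- The norm of the rescaled space `X^p`: `‖f‖_{X^p} = ‖ |f|^{1/p} ‖_X^p`. -/
def powNorm {n : ℕ} (N : ((Fin n → ℝ) → ℝ≥0∞) → ℝ≥0∞) (p : ℝ)
    (f : (Fin n → ℝ) → ℝ≥0∞) : ℝ≥0∞ :=
  (N fun x => f x ^ (1 / p)) ^ p

/-- Boundedness of the Hardy–Littlewood maximal operator on the space with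
function norm `N`. -/
def MaximalBounded {n : ℕ} (N : ((Fin n → ℝ) → ℝ≥0∞) → ℝ≥0∞) : Prop :=
  ∃ C : ℝ≥0, ∀ f, Measurable f → N (hlMaximal f) ≤ (C : ℝ≥0∞) * N f

/-- The function `φ_X(λ) = inf {‖m_λ f‖_X : ‖f‖_X = 1}`. -/
def phiFn {n : ℕ} (N : ((Fin n → ℝ) → ℝ≥0∞) → ℝ≥0∞) (lam : ℝ) : ℝ≥0∞ :=
  ⨅ (f : (Fin n → ℝ) → ℝ≥0∞) (_ : Measurable f) (_ : N f = 1), N (locMax lam f)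

/-- Unboundedness of `φ_X` on `(0,1)`. -/
def phiUnbounded {n : ℕ} (N : ((Fin n → ℝ) → ℝ≥0∞) → ℝ≥0∞) : Prop :=
  (⨆ lam ∈ Set.Ioo (0 : ℝ) 1, phiFn N lam) = ⊤

/-- Local integrability of a weight (finite integral over every cube). -/
def LocIntegrableW {n : ℕ} (w : (Fin n → ℝ) → ℝ≥0∞) : Prop :=
  ∀ (a : Fin n → ℝ) (h : ℝ), 0 < h → (∫⁻ x in Cube a h, w x) < ⊤

/-- The `A₁` constant `[w]_{A₁} = ‖Mw/w‖_{L^∞}`. -/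
def A1Const {n : ℕ} (w : (Fin n → ℝ) → ℝ≥0∞) : ℝ≥0∞ :=
  essSup (fun x => hlMaximal w x / w x) volume

/-- The (Fujii–Wilson) `A_∞` constant `[w]_{A_∞} = sup_Q (∫_Q M(wχ_Q)) / w(Q)`. -/
def AinfConst {n : ℕ} (w : (Fin n → ℝ) → ℝ≥0∞) : ℝ≥0∞ :=
  ⨆ (a : Fin n → ℝ) (h : ℝ) (_ : 0 < h),
    (∫⁻ x in Cube a h, hlMaximal (Set.indicator (Cube a h) w) x) /
      ∫⁻ x in Cube a h, w x

/-- The `A_p` constant: for `p = 1` it is the `A₁` constant, and for `p > 1` it is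
`[w]_{A_p} = sup_Q ⟨w⟩_Q ⟨w^{-p'/p}⟩_Q^{p/p'}` (note `p'/p = 1/(p-1)` and `p/p' = p-1`). -/
def ApConst {n : ℕ} (p : ℝ) (w : (Fin n → ℝ) → ℝ≥0∞) : ℝ≥0∞ :=
  if p = 1 then A1Const w
  else
    ⨆ (a : Fin n → ℝ) (h : ℝ) (_ : 0 < h),
      ((∫⁻ x in Cube a h, w x) / volume (Cube a h)) *
        ((∫⁻ x in Cube a h, w x ^ (-(p - 1)⁻¹)) / volume (Cube a h)) ^ (p - 1)

/-- `A_p`-regularity of the space with function norm `N`: there are `C₁, C₂ > 0` such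
that every `f` in the space is dominated by an `A_p` weight `w` with `[w]_{A_p} ≤ C₁`
and `‖w‖ ≤ C₂ ‖f‖`. -/
def IsApRegular {n : ℕ} (N : ((Fin n → ℝ) → ℝ≥0∞) → ℝ≥0∞) (p : ℝ) : Prop :=
  ∃ C₁ C₂ : ℝ≥0, 0 < C₁ ∧ 0 < C₂ ∧
    ∀ f, Measurable f → N f < ⊤ →
      ∃ w : (Fin n → ℝ) → ℝ≥0∞, Measurable w ∧ LocIntegrableW w ∧
        (∀ᵐ x ∂volume, f x ≤ w x) ∧ ApConst p w ≤ (C₁ : ℝ≥0∞) ∧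
        N w ≤ (C₂ : ℝ≥0∞) * N f

/-- `A_∞`-regularity of the space with function norm `N`. -/
def IsAinfRegular {n : ℕ} (N : ((Fin n → ℝ) → ℝ≥0∞) → ℝ≥0∞) : Prop :=
  ∃ C₁ C₂ : ℝ≥0, 0 < C₁ ∧ 0 < C₂ ∧
    ∀ f, Measurable f → N f < ⊤ →
      ∃ w : (Fin n → ℝ) → ℝ≥0∞, Measurable w ∧ LocIntegrableW w ∧
        (∀ᵐ x ∂volume, f x ≤ w x) ∧ AinfConst w ≤ (C₁ : ℝ≥0∞) ∧
        N w ≤ (C₂ : ℝ≥0∞) * N f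

/-- The Fefferman–Stein sharp maximal function
`f^#(x) = sup_{Q ∋ x} (1/|Q|) ∫_Q |f - ⟨f⟩_Q|`. -/
def sharpMax {n : ℕ} (f : (Fin n → ℝ) → ℝ) (x : Fin n → ℝ) : ℝ≥0∞ :=
  ⨆ (a : Fin n → ℝ) (h : ℝ) (_ : 0 < h) (_ : x ∈ Cube a h),
    (∫⁻ y in Cube a h,
      (‖f y - (∫ z in Cube a h, f z) / (volume (Cube a h)).toReal‖₊ : ℝ≥0∞)) /
      volume (Cube a h)

/-- Membership in `S₀(ℝⁿ)`: all level sets `{|f| > α}`, `α > 0`, have finite measure. -/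
def MemS0 {n : ℕ} (f : (Fin n → ℝ) → ℝ) : Prop :=
  ∀ α : ℝ, 0 < α → volume {x | α < |f x|} < ⊤

/-- `p`-convexity of a Banach function space. -/
def IsPConvex {n : ℕ} (X : BanachFunctionSpace n) (p : ℝ) : Prop :=
  ∀ f g, Measurable f → Measurable g →
    X.ρ (fun x => (f x ^ p + g x ^ p) ^ (1 / p)) ≤ (X.ρ f ^ p + X.ρ g ^ p) ^ (1 / p)

/-- `q`-concavity of a Banach function space. -/
def IsQConcave {n : ℕ} (X : BanachFunctionSpace n) (q : ℝ) : Prop :=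
  ∀ f g, Measurable f → Measurable g →
    (X.ρ f ^ q + X.ρ g ^ q) ^ (1 / q) ≤ X.ρ (fun x => (f x ^ q + g x ^ q) ^ (1 / q))

lemma cube_eq_pi {n : ℕ} (a : Fin n → ℝ) (h : ℝ) :
    Cube a h = Set.pi Set.univ (fun i => Set.Icc (a i) (a i + h)) := by
  ext x; simp [Cube, Set.mem_pi, Pi.le_def, forall_and]

lemma measurableSet_cube {n : ℕ} (a : Fin n → ℝ) (h : ℝ) : MeasurableSet (Cube a h) := by
  rw [cube_eq_pi]; exact MeasurableSet.univ_pi fun i => measurableSet_Icc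

lemma volume_cube {n : ℕ} (a : Fin n → ℝ) (h : ℝ) :
    volume (Cube a h) = ENNReal.ofReal h ^ n := by
  rw [cube_eq_pi, volume_pi_pi]
  simp [Real.volume_Icc]

lemma volume_cube_ne_zero {n : ℕ} (a : Fin n → ℝ) {h : ℝ} (hh : 0 < h) :
    volume (Cube a h) ≠ 0 := by
  rw [volume_cube]
  exact pow_ne_zero _ (by simpa using hh)

lemma volume_cube_ne_top {n : ℕ} (a : Fin n → ℝ) (h : ℝ) :
    volume (Cube a h) ≠ ⊤ := by
  rw [volume_cube]
  exact ENNReal.pow_ne_top ENNReal.ofReal_ne_top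

lemma cube_avg_le_hlMaximal {n : ℕ} (f : (Fin n → ℝ) → ℝ≥0∞) {a : Fin n → ℝ} {h : ℝ}
    (hh : 0 < h) {x : Fin n → ℝ} (hx : x ∈ Cube a h) :
    (∫⁻ y in Cube a h, f y) / volume (Cube a h) ≤ hlMaximal f x :=
  le_iSup_of_le a (le_iSup_of_le h (le_iSup_of_le hh (le_iSup_of_le hx le_rfl)))

lemma hlMaximal_mono {n : ℕ} {f g : (Fin n → ℝ) → ℝ≥0∞}
    (hfg : ∀ᵐ y ∂volume, f y ≤ g y) (x : Fin n → ℝ) : hlMaximal f x ≤ hlMaximal g x := by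
  refine iSup_le fun a => iSup_le fun h => iSup_le fun hh => iSup_le fun hx => ?_
  refine le_trans ?_ (cube_avg_le_hlMaximal g hh hx)
  exact ENNReal.div_le_div_right (lintegral_mono_ae (ae_restrict_of_ae hfg)) _

/-- the candidate function attached to a rational cube -/
def ratCand {n : ℕ} (f : (Fin n → ℝ) → ℝ≥0∞) (q : (Fin n → ℚ) × ℚ) (x : Fin n → ℝ) : ℝ≥0∞ :=
  ⨆ (_ : 0 < ((q.2 : ℝ))) (_ : x ∈ Cube (fun i => (q.1 i : ℝ)) (q.2 : ℝ)),
    (∫⁻ y in Cube (fun i => (q.1 i : ℝ)) (q.2 : ℝ), f y) /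
      volume (Cube (fun i => (q.1 i : ℝ)) (q.2 : ℝ))

lemma measurable_ratCand {n : ℕ} (f : (Fin n → ℝ) → ℝ≥0∞) (q : (Fin n → ℚ) × ℚ) :
    Measurable (ratCand f q) := by
  by_cases hq : 0 < ((q.2 : ℝ))
  · have : ratCand f q = Set.indicator (Cube (fun i => (q.1 i : ℝ)) (q.2 : ℝ))
        (fun _ => (∫⁻ y in Cube (fun i => (q.1 i : ℝ)) (q.2 : ℝ), f y) /
          volume (Cube (fun i => (q.1 i : ℝ)) (q.2 : ℝ))) := by
      funext x
      by_cases hx : x ∈ Cube (fun i => (q.1 i : ℝ)) (q.2 : ℝ) <;>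
        simp [ratCand, hq, hx]
    rw [this]
    exact Measurable.indicator measurable_const (measurableSet_cube _ _)
  · have : ratCand f q = fun _ => 0 := by
      funext x; simp [ratCand, hq]
    rw [this]; exact measurable_const

lemma hlMaximal_eq_ratSup {n : ℕ} (f : (Fin n → ℝ) → ℝ≥0∞) (x : Fin n → ℝ) :
    hlMaximal f x = ⨆ q : (Fin n → ℚ) × ℚ, ratCand f q x := by
  apply le_antisymm
  · refine iSup_le fun a => iSup_le fun h => iSup_le fun hh => iSup_le fun hx => ?_
    set c := ∫⁻ y in Cube a h, f y with hc
    have key : ∀ m : ℕ, c / (ENNReal.ofReal (h + 2 * (1 / ((m : ℝ) + 1)))) ^ n ≤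
        ⨆ q : (Fin n → ℚ) × ℚ, ratCand f q x := by
      intro m
      set ε : ℝ := 1 / ((m : ℝ) + 1) with hεdef
      have hε : 0 < ε := by positivity
      have hq : ∀ i : Fin n, ∃ q : ℚ, a i - ε < (q : ℝ) ∧ (q : ℝ) < a i :=
        fun i => exists_rat_btwn (by linarith)
      choose q hq1 hq2 using hq
      obtain ⟨r, hr1, hr2⟩ : ∃ r : ℚ, h + ε < (r : ℝ) ∧ (r : ℝ) < h + 2 * ε :=
        exists_rat_btwn (by linarith)
      have hr0 : 0 < ((r : ℝ)) := by linarith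
      have hsub : Cube a h ⊆ Cube (fun i => (q i : ℝ)) (r : ℝ) := by
        intro y hy i
        have h1 := (hy i).1
        have h2 := (hy i).2
        exact ⟨by linarith [hq2 i], by linarith [hq1 i]⟩
      have hx' : x ∈ Cube (fun i => (q i : ℝ)) (r : ℝ) := hsub hx
      have h1 : c / (ENNReal.ofReal (h + 2 * ε)) ^ n ≤ ratCand f (q, r) x := by
        have : ratCand f (q, r) x =
            (∫⁻ y in Cube (fun i => (q i : ℝ)) (r : ℝ), f y) /
              volume (Cube (fun i => (q i : ℝ)) (r : ℝ)) := by
          simp [ratCand, hr0, hx']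
        rw [this, volume_cube]
        exact ENNReal.div_le_div (lintegral_mono_set hsub)
          (pow_le_pow_left' (ENNReal.ofReal_le_ofReal hr2.le) n)
      exact h1.trans (le_iSup (fun q : (Fin n → ℚ) × ℚ => ratCand f q x) (q, r))
    by_cases hctop : c = ⊤
    · have := key 0
      rw [hctop, ENNReal.top_div_of_ne_top (ENNReal.pow_ne_top ENNReal.ofReal_ne_top)] at this
      exact le_trans le_top (le_of_eq (top_le_iff.mp this).symm)
    · rw [volume_cube]
      have T1 : Tendsto (fun m : ℕ => h + 2 * (1 / ((m : ℝ) + 1))) atTop (𝓝 h) := by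
        have := tendsto_one_div_add_atTop_nhds_zero_nat.const_mul (2 : ℝ)
        simpa using tendsto_const_nhds.add this
      have T3 : Tendsto (fun m : ℕ => (ENNReal.ofReal (h + 2 * (1 / ((m : ℝ) + 1)))) ^ n)
          atTop (𝓝 ((ENNReal.ofReal h) ^ n)) :=
        ((ENNReal.continuous_pow n).tendsto _).comp
          ((ENNReal.continuous_ofReal.tendsto _).comp T1)
      have T4 : Tendsto (fun m : ℕ => c / (ENNReal.ofReal (h + 2 * (1 / ((m : ℝ) + 1)))) ^ n)
          atTop (𝓝 (c / (ENNReal.ofReal h) ^ n)) := by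
        simp only [div_eq_mul_inv]
        exact ENNReal.Tendsto.const_mul T3.inv (Or.inr hctop)
      exact le_of_tendsto T4 (Eventually.of_forall key)
  · refine iSup_le fun qr => iSup_le fun hr => iSup_le fun hx => ?_
    exact cube_avg_le_hlMaximal f hr hx

lemma measurable_hlMaximal {n : ℕ} (f : (Fin n → ℝ) → ℝ≥0∞) : Measurable (hlMaximal f) := by
  have : hlMaximal f = fun x => ⨆ q : (Fin n → ℚ) × ℚ, ratCand f q x := by
    funext x; exact hlMaximal_eq_ratSup f x
  rw [this]
  exact Measurable.iSup fun q => measurable_ratCand f q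

/-- Pure arithmetic: from `1 ≤ d^(1/δ) * b^(s⁻¹)` and `a * b^(s⁻¹) ≤ C` conclude. -/
lemma arith_key {a b d C : ℝ≥0∞} {s δ : ℝ}
    (h1 : 1 ≤ d ^ (1/δ) * b ^ s⁻¹) (h2 : a * b ^ s⁻¹ ≤ C) :
    a ≤ C * d ^ (1/δ) := by
  calc a = a * 1 := (mul_one a).symm
    _ ≤ a * (d ^ (1/δ) * b ^ s⁻¹) := mul_le_mul_right h1 a
    _ = (a * b ^ s⁻¹) * d ^ (1/δ) := by ring
    _ ≤ C * d ^ (1/δ) := mul_le_mul_left h2 _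

/-- Per-cube reverse-Jensen estimate from the `A_p` condition (p > 1 case). -/
lemma percube {n : ℕ} {w : (Fin n → ℝ) → ℝ≥0∞} (hw : Measurable w)
    {s δ : ℝ} (hs : 0 < s) (hδ : 0 < δ) {C₁ : ℝ≥0∞} (hC₁0 : C₁ ≠ 0) (hC₁top : C₁ ≠ ⊤)
    {a : Fin n → ℝ} {h : ℝ} (hh : 0 < h)
    (hA : (∫⁻ x in Cube a h, w x) ≠ ⊤)
    (hAp : ((∫⁻ x in Cube a h, w x) / volume (Cube a h)) *
      (((∫⁻ x in Cube a h, w x ^ (-s)) / volume (Cube a h))) ^ s⁻¹ ≤ C₁) :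
    (∫⁻ x in Cube a h, w x) / volume (Cube a h) ≤
      C₁ * (((∫⁻ x in Cube a h, w x ^ δ) / volume (Cube a h))) ^ (1/δ) := by
  set Q := Cube a h
  set V := volume Q with hV
  have hV0 : V ≠ 0 := volume_cube_ne_zero a hh
  have hVtop : V ≠ ⊤ := volume_cube_ne_top a h
  set A := ∫⁻ x in Q, w x
  set B := ∫⁻ x in Q, w x ^ (-s) with hB
  set D := ∫⁻ x in Q, w x ^ δ with hD
  by_cases hDtop : D = ⊤
  · have : (D / V) ^ (1/δ) = ⊤ := by
      rw [hDtop, ENNReal.top_div_of_ne_top hVtop]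
      exact ENNReal.top_rpow_of_pos (by positivity)
    rw [this, ENNReal.mul_top hC₁0]
    exact le_top
  by_cases hBtop : B = ⊤
  · -- then A / V must be zero
    have hb : (B / V) ^ s⁻¹ = ⊤ := by
      rw [hBtop, ENNReal.top_div_of_ne_top hVtop]
      exact ENNReal.top_rpow_of_pos (by positivity)
    rw [hb] at hAp
    rcases eq_or_ne (A / V) 0 with h0 | h0
    · rw [h0]; exact zero_le
    · rw [ENNReal.mul_top h0] at hAp
      exact absurd (top_le_iff.mp (le_trans hAp le_top)) (by simpa using hAp.trans_lt hC₁top.lt_top |>.ne)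
  -- main case
  have hsδ : 0 < s + δ := by linarith
  set u : ℝ := s / (s + δ) with hu
  set v : ℝ := δ / (s + δ) with hv
  set t : ℝ := (s + δ) / (s * δ) with ht
  have hut : u * t = 1 / δ := by rw [hu, ht]; field_simp; try ring
  have hvt : v * t = s⁻¹ := by rw [hv, ht]; field_simp; try ring
  have huv : u + v = 1 := by rw [hu, hv, ← add_div, div_self hsδ.ne']
  -- a.e. facts on Q
  have hwlt : ∀ᵐ x ∂(volume.restrict Q), w x < ⊤ := ae_lt_top hw hA
  have hwslt : ∀ᵐ x ∂(volume.restrict Q), w x ^ (-s) < ⊤ :=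
    ae_lt_top (hw.pow_const _) hBtop
  have hwpos : ∀ᵐ x ∂(volume.restrict Q), w x ≠ 0 := by
    filter_upwards [hwslt] with x hx
    intro h0
    rw [h0, ENNReal.zero_rpow_of_neg (by linarith)] at hx
    exact absurd hx (lt_irrefl _)
  -- Hölder
  set e : ℝ := s * δ / (s + δ) with he
  have hep : e * ((s + δ)/s) = δ := by rw [he]; field_simp; try ring
  have heq : -e * ((s + δ)/δ) = -s := by rw [he]; field_simp; try ring
  have hcon : Real.HolderConjugate ((s + δ)/s) ((s + δ)/δ) := by
    rw [Real.holderConjugate_iff]; constructor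
    · rw [lt_div_iff₀ hs]; linarith
    · rw [← one_div, ← one_div, one_div_div, one_div_div]; field_simp
  have hone : (fun x => w x ^ e * w x ^ (-e)) =ᵐ[volume.restrict Q] (fun _ => (1 : ℝ≥0∞)) := by
    filter_upwards [hwlt, hwpos] with x hxt hx0
    rw [← ENNReal.rpow_add _ _ hx0 hxt.ne]
    simp
  have holder := ENNReal.lintegral_mul_le_Lp_mul_Lq (volume.restrict Q) hcon
    ((hw.pow_const e).aemeasurable) ((hw.pow_const (-e)).aemeasurable)
  rw [show (fun x => w x ^ e) * (fun x => w x ^ (-e)) = fun x => w x ^ e * w x ^ (-e) from rfl,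
    lintegral_congr_ae hone] at holder
  simp only [lintegral_one, Measure.restrict_apply_univ] at holder
  have hDrw : ∫⁻ x in Q, (w x ^ e) ^ ((s + δ)/s) ∂volume = D := by
    rw [hD]
    refine lintegral_congr fun x => ?_
    rw [← ENNReal.rpow_mul, hep]
  have hBrw : ∫⁻ x in Q, (w x ^ (-e)) ^ ((s + δ)/δ) ∂volume = B := by
    rw [hB]
    refine lintegral_congr fun x => ?_
    rw [← ENNReal.rpow_mul, heq]
  rw [hDrw, hBrw] at holder
  have h1du : 1 / ((s + δ)/s) = u := by rw [one_div_div, hu]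
  have h1dv : 1 / ((s + δ)/δ) = v := by rw [one_div_div, hv]
  rw [h1du, h1dv] at holder
  -- holder : V ≤ D ^ u * B ^ v
  -- now convert to 1 ≤ (D/V)^u * (B/V)^v
  have hDfac : D = (D / V) * V := (ENNReal.div_mul_cancel hV0 hVtop).symm
  have hBfac : B = (B / V) * V := (ENNReal.div_mul_cancel hV0 hVtop).symm
  have hVfac : V = V ^ u * V ^ v := by
    rw [← ENNReal.rpow_add _ _ hV0 hVtop, huv, ENNReal.rpow_one]
  have key : 1 * V ≤ ((D / V) ^ u * (B / V) ^ v) * V := by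
    rw [one_mul]
    calc V ≤ D ^ u * B ^ v := holder
      _ = ((D / V) * V) ^ u * ((B / V) * V) ^ v := by rw [← hDfac, ← hBfac]
      _ = ((D / V) ^ u * (B / V) ^ v) * (V ^ u * V ^ v) := by
          rw [ENNReal.mul_rpow_of_nonneg _ _ (by positivity),
            ENNReal.mul_rpow_of_nonneg _ _ (by positivity)]
          ring
      _ = ((D / V) ^ u * (B / V) ^ v) * V := by rw [← hVfac]
  have hone' : 1 ≤ (D / V) ^ u * (B / V) ^ v :=
    (ENNReal.mul_le_mul_iff_left hV0 hVtop).mp key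
  have hone'' : 1 ≤ (D / V) ^ (1/δ) * (B / V) ^ s⁻¹ := by
    have := ENNReal.rpow_le_rpow hone' (le_of_lt (by positivity : (0:ℝ) < t))
    rwa [ENNReal.one_rpow, ENNReal.mul_rpow_of_nonneg _ _ (by positivity),
      ← ENNReal.rpow_mul, ← ENNReal.rpow_mul, hut, hvt] at this
  exact arith_key hone'' hAp


/-- **Proposition (Rutsky)**: if `X` is `A_p`-regular for some `1 ≤ p < ∞` and `M` is
bounded on `X^δ` for some `δ > 0`, then `M` is bounded on `X`. -/
theorem maximalBounded_of_apRegular_of_powNorm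
    (n : ℕ) (hn : 0 < n) (X : BanachFunctionSpace n)
    (p : ℝ) (hp : 1 ≤ p) (hreg : IsApRegular X.ρ p)
    (hpow : ∃ δ : ℝ, 0 < δ ∧ MaximalBounded (powNorm X.ρ δ)) :
    MaximalBounded X.ρ := by
  obtain ⟨δ, hδ, C0, hC0⟩ := hpow
  obtain ⟨C₁, C₂, hC₁, hC₂, hreg'⟩ := hreg
  by_cases hp1 : p = 1
  · -- the A₁ case: the maximal operator is pointwise controlled by the weight
    refine ⟨C₁ * C₂, fun f hf => ?_⟩
    by_cases hft : X.ρ f = ⊤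
    · rw [hft, ENNReal.mul_top (by exact_mod_cast (mul_pos hC₁ hC₂).ne')]
      exact le_top
    obtain ⟨w, hwm, hwloc, hfw, hApw, hρw⟩ := hreg' f hf (lt_top_iff_ne_top.mpr hft)
    rw [hp1] at hApw
    rw [ApConst, if_pos rfl] at hApw
    have hMww : ∀ᵐ x ∂volume, hlMaximal w x / w x ≤ (C₁ : ℝ≥0∞) :=
      (ae_le_essSup _).mono fun x hx => hx.trans hApw
    have hMw : ∀ᵐ x ∂volume, hlMaximal w x ≤ (C₁ : ℝ≥0∞) * w x := by
      filter_upwards [hMww] with x hx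
      rcases eq_or_ne (w x) 0 with h0 | h0
      · have hM0 : hlMaximal w x = 0 := by
          by_contra hM0
          rw [h0, ENNReal.div_zero hM0] at hx
          exact absurd (top_le_iff.mp hx) (by simp)
        simp [hM0]
      rcases eq_or_ne (w x) ⊤ with ht | ht
      · rw [ht, ENNReal.mul_top (by exact_mod_cast hC₁.ne')]
        exact le_top
      · exact (ENNReal.div_le_iff h0 ht).mp hx
    calc X.ρ (hlMaximal f) ≤ X.ρ (hlMaximal w) := by
          refine X.mono _ _ (measurable_hlMaximal f) (measurable_hlMaximal w) ?_
          exact Eventually.of_forall (hlMaximal_mono hfw)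
      _ ≤ X.ρ (fun x => (C₁ : ℝ≥0∞) * w x) :=
          X.mono _ _ (measurable_hlMaximal w) (hwm.const_mul _) hMw
      _ = (C₁ : ℝ≥0∞) * X.ρ w := X.smul_eq C₁ w hwm
      _ ≤ (C₁ : ℝ≥0∞) * ((C₂ : ℝ≥0∞) * X.ρ f) := mul_le_mul_right hρw _
      _ = ((C₁ * C₂ : ℝ≥0) : ℝ≥0∞) * X.ρ f := by
          rw [ENNReal.coe_mul]; ring
  · -- the case p > 1
    have hp1' : 1 < p := lt_of_le_of_ne hp (Ne.symm hp1)
    have hs : 0 < (p - 1)⁻¹ := inv_pos.mpr (by linarith)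
    set K : ℝ≥0 := C₁ * (C0 + 1) ^ ((1 : ℝ)/δ) * C₂ with hK
    have hK0 : K ≠ 0 := by
      have : (0 : ℝ≥0) < (C0 + 1) ^ ((1 : ℝ)/δ) :=
        NNReal.rpow_pos (by positivity)
      positivity
    refine ⟨K, fun f hf => ?_⟩
    by_cases hft : X.ρ f = ⊤
    · rw [hft, ENNReal.mul_top (by exact_mod_cast hK0)]
      exact le_top
    obtain ⟨w, hwm, hwloc, hfw, hApw, hρw⟩ := hreg' f hf (lt_top_iff_ne_top.mpr hft)
    rw [ApConst, if_neg hp1] at hApw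
    have h1 : ∀ (a : Fin n → ℝ) (h : ℝ), 0 < h →
        ((∫⁻ x in Cube a h, w x) / volume (Cube a h)) *
          (((∫⁻ x in Cube a h, w x ^ (-(p - 1)⁻¹)) / volume (Cube a h))) ^ (((p-1)⁻¹)⁻¹) ≤
          (C₁ : ℝ≥0∞) := by
      intro a h hh
      rw [inv_inv]
      refine le_trans ?_ hApw
      refine le_iSup_of_le a ?_
      refine le_iSup_of_le h ?_
      exact le_iSup_of_le hh le_rfl
    set G : (Fin n → ℝ) → ℝ≥0∞ := fun x => (hlMaximal (fun y => w y ^ δ) x) ^ (1/δ)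
      with hGdef
    have hGm : Measurable G := (measurable_hlMaximal _).pow_const _
    have hMw : ∀ x, hlMaximal w x ≤ (C₁ : ℝ≥0∞) * G x := by
      intro x
      refine iSup_le fun a => iSup_le fun h => iSup_le fun hh => iSup_le fun hx => ?_
      have hper := percube hwm hs hδ (by exact_mod_cast hC₁.ne') ENNReal.coe_ne_top hh
        (hwloc a h hh).ne (h1 a h hh)
      refine hper.trans (mul_le_mul_right ?_ _)
      exact ENNReal.rpow_le_rpow (cube_avg_le_hlMaximal _ hh hx) (by positivity)
    -- use boundedness of M on X^δ applied to w ^ δ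
    have h2 := hC0 (fun x => w x ^ δ) (hwm.pow_const δ)
    rw [powNorm, powNorm] at h2
    have hww : (fun x => (w x ^ δ) ^ (1/δ)) = w := by
      funext x
      rw [← ENNReal.rpow_mul, mul_one_div_cancel hδ.ne', ENNReal.rpow_one]
    rw [hww] at h2
    -- h2 : (X.ρ G) ^ δ ≤ C0 * (X.ρ w) ^ δ
    have hG : X.ρ G ≤ ((C0 : ℝ≥0∞) + 1) ^ (1/δ) * X.ρ w := by
      have h3 : ((X.ρ G) ^ δ) ^ (1/δ) ≤ ((C0 + 1 : ℝ≥0∞) * (X.ρ w) ^ δ) ^ (1/δ) := by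
        refine ENNReal.rpow_le_rpow (h2.trans ?_) (by positivity)
        exact mul_le_mul_left (by simp) _
      rwa [← ENNReal.rpow_mul, mul_one_div_cancel hδ.ne', ENNReal.rpow_one,
        ENNReal.mul_rpow_of_nonneg _ _ (by positivity), ← ENNReal.rpow_mul,
        mul_one_div_cancel hδ.ne', ENNReal.rpow_one] at h3
    calc X.ρ (hlMaximal f) ≤ X.ρ (hlMaximal w) := by
          refine X.mono _ _ (measurable_hlMaximal f) (measurable_hlMaximal w) ?_
          exact Eventually.of_forall (hlMaximal_mono hfw)
      _ ≤ X.ρ (fun x => (C₁ : ℝ≥0∞) * G x) :=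
          X.mono _ _ (measurable_hlMaximal w) (hGm.const_mul _) (Eventually.of_forall hMw)
      _ = (C₁ : ℝ≥0∞) * X.ρ G := X.smul_eq C₁ G hGm
      _ ≤ (C₁ : ℝ≥0∞) * (((C0 : ℝ≥0∞) + 1) ^ (1/δ) * ((C₂ : ℝ≥0∞) * X.ρ f)) := by
          refine mul_le_mul_right (hG.trans ?_) _
          exact mul_le_mul_right hρw _
      _ = (K : ℝ≥0∞) * X.ρ f := by
          rw [hK]
          push_cast [ENNReal.coe_rpow_of_nonneg _ (by positivity : (0:ℝ) ≤ 1/δ)]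
          ring

end
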